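/- arXiv:1903.07797 — 3 statements merged into one kernel-verified Lean document; each statement's English description precedes it below -/
import Mathlib

section
/- Let p and p̄ be Nash-social-welfare-maximizing stochastic matchings before and after removing some subset of agents, with valuations normalized so that u_i(p)=1 for every original agent i. If there is a set N₁ of remaining agents and a constant d ≥ 12 such that every agent i ∈ N₁ has u_i(p̄) ≤ u_i(p)/d, then there exists a set N₂ of remaining agents with |N₂| ≥ d|N₁|/3 such that every k ∈ N₂ has u_k(p̄) ≤ 4 u_k(p)/d. -/
/-!
Perturbing an NSW optimum `q` for the agents `S` along feasible directions gives first-order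
conditions: `v i j / u_i ≤ v k j / u_k + 1` whenever `q k j > 0`, and `v i j ≤ u_i` when item `j`
is not fully allocated. With the price `π_j = ∑ₖ q k j * v k j / u_k` they combine to
`v i j / u_i ≤ π_j + 1`.

Applied to `p̄` along the bundle that `i ∈ N₁` gets in `p`, this gives
`1 = u_i(p) ≤ u_i(p̄) (∑ⱼ p i j π_j + 1)`, so the `p`-bundle of each `i ∈ N₁` costs at least
`d - 1`. Summing over `N₁` and expanding `π`, agent `k` contributes `B_k / u_k(p̄)`, where `B_k` is
its `p̄`-utility from the items held by `N₁` in `p`. Each term is at most `1`, and for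
`u_k(p̄) > 4 / d` at most `(d / 4) B_k`, while the optimality conditions for `p` give
`∑ₖ B_k ≤ 2 |N₁|`. Hence `(d - 1) |N₁| ≤ |N₂| + (d / 2) |N₁|`.
-/

open Finset

/-- A stochastic matching for the set `S` of agents: nonnegative entries, rows of
agents in `S` sum to `1`, agents outside `S` get nothing, and each item (column)
is allocated a total of at most `1`. -/
def IsStochMatching {n : ℕ} (S : Finset (Fin n)) (p : Matrix (Fin n) (Fin n) ℝ) : Prop :=
  (∀ i j, 0 ≤ p i j) ∧ (∀ i ∈ S, ∑ j, p i j = 1) ∧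
  (∀ i ∉ S, ∀ j, p i j = 0) ∧ (∀ j, ∑ i, p i j ≤ 1)

/-- The expected utility of agent `i` under `p` with values `v`. -/
def utility {n : ℕ} (v p : Matrix (Fin n) (Fin n) ℝ) (i : Fin n) : ℝ :=
  ∑ j, v i j * p i j

/-- `p` maximizes the Nash social welfare over stochastic matchings for agent set `S`. -/
def IsNSWMax {n : ℕ} (v : Matrix (Fin n) (Fin n) ℝ) (S : Finset (Fin n))
    (p : Matrix (Fin n) (Fin n) ℝ) : Prop :=
  IsStochMatching S p ∧
    ∀ q, IsStochMatching S q → ∏ i ∈ S, utility v q i ≤ ∏ i ∈ S, utility v p i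

theorem sum_div_nonpos_of_prod_add_mul_le {ι : Type*} {s : Finset ι} {u c : ι → ℝ}
    (hu : ∀ i ∈ s, 0 < u i) {ε₀ : ℝ} (hε₀ : 0 < ε₀)
    (h : ∀ ε ∈ Set.Icc 0 ε₀, ∏ i ∈ s, (u i + ε * c i) ≤ ∏ i ∈ s, u i) :
    ∑ i ∈ s, c i / u i ≤ 0 := by
  classical
  have hderiv : HasDerivAt (fun ε => ∏ i ∈ s, (u i + ε * c i))
      ((∏ j ∈ s, u j) * ∑ i ∈ s, c i / u i) 0 := by
    refine (HasDerivAt.fun_finsetProd fun i _ =>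
      ((hasDerivAt_id (0 : ℝ)).mul_const (c i)).const_add (u i)).congr_deriv ?_
    rw [mul_sum]
    refine sum_congr rfl fun i hi => ?_
    rw [← prod_erase_mul s u hi]
    field_simp [(hu i hi).ne']
    simp [mul_comm]
  have hmax : IsLocalMaxOn (fun ε => ∏ i ∈ s, (u i + ε * c i)) (Set.Icc 0 ε₀) 0 :=
    IsMaxOn.localize fun ε hε => by simpa using h ε hε
  have hslope := hmax.hasFDerivWithinAt_nonpos hderiv.hasDerivWithinAt.hasFDerivWithinAt
    (mem_posTangentConeAt_of_segment_subset (y := ε₀) (by simp [segment_eq_Icc hε₀.le]))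
  rw [ContinuousLinearMap.toSpanSingleton_apply, smul_eq_mul] at hslope
  have := mul_pos hε₀ (prod_pos hu)
  nlinarith

theorem le_sum_mul_of_forall_pos {ι : Type*} [Fintype ι] {r f : ι → ℝ} {c : ℝ}
    (hr : ∀ j, 0 ≤ r j) (hr1 : ∑ j, r j = 1) (h : ∀ j, 0 < r j → c ≤ f j) :
    c ≤ ∑ j, r j * f j := by
  calc c = ∑ j, r j * c := by rw [← sum_mul, hr1, one_mul]
    _ ≤ ∑ j, r j * f j := sum_le_sum fun j _ => by
      rcases (hr j).eq_or_lt with h0 | hpos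
      · simp [← h0]
      · exact mul_le_mul_of_nonneg_left (h j hpos) hpos.le

theorem sum_div_le_card_filter_add {ι : Type*} (s : Finset ι) {u B : ι → ℝ} {t : ℝ}
    (ht : 0 < t) (hu : ∀ k ∈ s, 0 < u k) (hB : ∀ k ∈ s, 0 ≤ B k)
    (hBu : ∀ k ∈ s, B k ≤ u k) :
    ∑ k ∈ s, B k / u k ≤ #(s.filter (u · ≤ t)) + (∑ k ∈ s, B k) / t := by
  have hterm : ∀ k ∈ s, B k / u k ≤ (if u k ≤ t then 1 else 0) + B k / t := by
    intro k hk
    split_ifs with hkt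
    · have := div_le_one_of_le₀ (hBu k hk) (hu k hk).le
      have := div_nonneg (hB k hk) ht.le
      linarith
    · rw [zero_add]
      exact div_le_div_of_nonneg_left (hB k hk) ht (not_le.mp hkt).le
  calc ∑ k ∈ s, B k / u k ≤ ∑ k ∈ s, ((if u k ≤ t then 1 else 0) + B k / t) := sum_le_sum hterm
    _ = _ := by rw [sum_add_distrib, sum_boole, sum_div]

section Matching

variable {n : ℕ} (v : Matrix (Fin n) (Fin n) ℝ)

theorem utility_nonneg (hv : ∀ i j, 0 ≤ v i j) {q : Matrix (Fin n) (Fin n) ℝ}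
    (hq : ∀ i j, 0 ≤ q i j) (i : Fin n) : 0 ≤ utility v q i :=
  sum_nonneg fun j _ => mul_nonneg (hv i j) (hq i j)

theorem sum_mul_mul_le_utility (hv : ∀ i j, 0 ≤ v i j) {q : Matrix (Fin n) (Fin n) ℝ}
    (hq : ∀ i j, 0 ≤ q i j) {c : Fin n → ℝ} (hc : ∀ j, c j ≤ 1) (k : Fin n) :
    ∑ j, c j * (q k j * v k j) ≤ utility v q k :=
  sum_le_sum fun j _ => by
    simpa [mul_comm] using mul_le_of_le_one_left (mul_nonneg (hq k j) (hv k j)) (hc j)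

theorem utility_add_smul (q D : Matrix (Fin n) (Fin n) ℝ) (ε : ℝ) (i : Fin n) :
    utility v (q + ε • D) i = utility v q i + ε * utility v D i := by
  simp only [utility, Matrix.add_apply, Matrix.smul_apply, smul_eq_mul, mul_add,
    sum_add_distrib, mul_sum, mul_left_comm]

theorem utility_vecMulVec (a b : Fin n → ℝ) (i : Fin n) :
    utility v (Matrix.vecMulVec a b) i = a i * ∑ j, v i j * b j := by
  simp only [utility, Matrix.vecMulVec_apply, mul_sum, mul_left_comm]

theorem IsStochMatching.restrict {S T : Finset (Fin n)} {q : Matrix (Fin n) (Fin n) ℝ}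
    (hq : IsStochMatching T q) (hST : S ⊆ T) :
    IsStochMatching S (fun i j => if i ∈ S then q i j else 0) := by
  obtain ⟨hnonneg, hrow, -, hcol⟩ := hq
  refine ⟨fun i j => ?_, fun i hi => by simpa [hi] using hrow i (hST hi),
    fun i hi j => by simp [hi], fun j => (sum_le_sum fun i _ => ?_).trans (hcol j)⟩
  · dsimp only
    split_ifs
    exacts [hnonneg i j, le_rfl]
  · dsimp only
    split_ifs
    exacts [le_rfl, hnonneg i j]

theorem IsStochMatching.add_smul_vecMulVec {S : Finset (Fin n)} {q : Matrix (Fin n) (Fin n) ℝ}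
    (hq : IsStochMatching S q) {a b : Fin n → ℝ} {ε : ℝ} (ha : ∀ i ∉ S, a i = 0)
    (hb : ∑ j, b j = 0) (hnonneg : ∀ i j, 0 ≤ q i j + ε * (a i * b j))
    (hcol : ∀ j, ∑ i, q i j + ε * ((∑ i, a i) * b j) ≤ 1) :
    IsStochMatching S (q + ε • Matrix.vecMulVec a b) := by
  obtain ⟨-, hrow, hzero, hcol'⟩ := hq
  refine ⟨fun i j => hnonneg i j, fun i hi => ?_, fun i hi j => ?_, fun j => ?_⟩
  · simp [sum_add_distrib, Matrix.vecMulVec_apply, ← mul_sum, hb, hrow i hi]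
  · simp [Matrix.vecMulVec_apply, ha i hi, hzero i hi j]
  · simpa [sum_add_distrib, Matrix.vecMulVec_apply, ← mul_sum, ← sum_mul] using hcol j

end Matching

/-- The total spending on item `j` when the NSW optimum `q` is read as a Fisher market with unit
budgets: agent `k` spends the share `q k j * v k j / u_k` of its budget on `j`. -/
noncomputable def nswPrice {n : ℕ} (v : Matrix (Fin n) (Fin n) ℝ) (S : Finset (Fin n))
    (q : Matrix (Fin n) (Fin n) ℝ) (j : Fin n) : ℝ :=
  ∑ k ∈ S, q k j * (v k j / utility v q k)

theorem sum_sum_mul_nswPrice {n : ℕ} (v : Matrix (Fin n) (Fin n) ℝ) (S T : Finset (Fin n))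
    (p q : Matrix (Fin n) (Fin n) ℝ) :
    ∑ i ∈ T, ∑ j, p i j * nswPrice v S q j =
      ∑ k ∈ S, (∑ j, (∑ i ∈ T, p i j) * (q k j * v k j)) / utility v q k := by
  simp only [nswPrice, mul_sum, sum_mul, sum_div]
  rw [sum_comm, eq_comm, sum_comm]
  refine sum_congr rfl fun j _ => ?_
  rw [sum_comm]
  exact sum_congr rfl fun k _ => sum_congr rfl fun i _ => by ring

namespace IsNSWMax

variable {n : ℕ} {v : Matrix (Fin n) (Fin n) ℝ} {S : Finset (Fin n)} {q : Matrix (Fin n) (Fin n) ℝ}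

theorem utility_pos (hv : ∀ i j, 0 ≤ v i j) (hmax : IsNSWMax v S q)
    {q' : Matrix (Fin n) (Fin n) ℝ} (hq' : IsStochMatching S q')
    (hpos' : ∀ i ∈ S, 0 < utility v q' i) : ∀ i ∈ S, 0 < utility v q i := by
  have hprod : 0 < ∏ i ∈ S, utility v q i := (prod_pos hpos').trans_le (hmax.2 q' hq')
  intro i hi
  exact (utility_nonneg v hv hmax.1.1 i).lt_of_ne' (prod_ne_zero_iff.1 hprod.ne' i hi)

theorem utility_pos_of_subset (hv : ∀ i j, 0 ≤ v i j) (hmax : IsNSWMax v S q)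
    {T : Finset (Fin n)} {p : Matrix (Fin n) (Fin n) ℝ} (hp : IsStochMatching T p) (hST : S ⊆ T)
    (hpos : ∀ i ∈ S, 0 < utility v p i) : ∀ i ∈ S, 0 < utility v q i :=
  hmax.utility_pos hv (hp.restrict hST) fun i hi => by simpa [utility, hi] using hpos i hi

theorem sum_utility_div_nonpos (hmax : IsNSWMax v S q)
    (hpos : ∀ i ∈ S, 0 < utility v q i) {D : Matrix (Fin n) (Fin n) ℝ} {ε₀ : ℝ} (hε₀ : 0 < ε₀)
    (hD : ∀ ε ∈ Set.Icc 0 ε₀, IsStochMatching S (q + ε • D)) :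
    ∑ i ∈ S, utility v D i / utility v q i ≤ 0 :=
  sum_div_nonpos_of_prod_add_mul_le hpos hε₀ fun ε hε => by
    simpa only [utility_add_smul] using hmax.2 _ (hD ε hε)

theorem sub_div_utility_le (hmax : IsNSWMax v S q)
    (hpos : ∀ i ∈ S, 0 < utility v q i) {i k j j' : Fin n} (hi : i ∈ S) (hk : k ∈ S)
    (hkj : 0 < q k j) (hij' : 0 < q i j') :
    (v i j - v i j') / utility v q i ≤ (v k j - v k j') / utility v q k := by
  -- shift mass `ε` of item `j` from `k` to `i`, and of item `j'` from `i` to `k`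
  set a : Fin n → ℝ := Pi.single i 1 - Pi.single k 1
  set b : Fin n → ℝ := Pi.single j 1 - Pi.single j' 1
  have hD : ∀ ε ∈ Set.Icc 0 (min (q k j) (q i j')),
      IsStochMatching S (q + ε • Matrix.vecMulVec a b) := by
    rintro ε ⟨hε0, hε⟩
    refine hmax.1.add_smul_vecMulVec (fun x hx => ?_) (by simp [b]) (fun x y => ?_)
      (fun y => by simpa [a] using hmax.1.2.2.2 y)
    · simp [a, ne_of_mem_of_not_mem hi hx, ne_of_mem_of_not_mem hk hx]
    · have := hmax.1.1 x y
      have := min_le_left (q k j) (q i j')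
      have := min_le_right (q k j) (q i j')
      simp only [a, b, Pi.sub_apply, Pi.single_apply]
      split_ifs <;> simp_all <;> nlinarith
  have := hmax.sum_utility_div_nonpos hpos (lt_min hkj hij') hD
  have hb : ∀ x, ∑ y, v x y * b y = v x j - v x j' := by
    simp [b, mul_sub, sum_sub_distrib, Pi.single_apply]
  simp only [utility_vecMulVec, hb, a, Pi.sub_apply, sub_mul, sub_div, sum_sub_distrib,
    Pi.single_apply, ite_mul, one_mul, zero_mul, ite_div, zero_div, sum_ite_eq', hi, hk,
    if_true] at this
  rw [sub_div, sub_div]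
  linarith

theorem le_of_column_slack (hmax : IsNSWMax v S q)
    (hpos : ∀ i ∈ S, 0 < utility v q i) {i j j' : Fin n} (hi : i ∈ S)
    (hslack : ∑ x, q x j < 1) (hij' : 0 < q i j') : v i j ≤ v i j' := by
  -- agent `i` trades mass `ε` of item `j'` for the unallocated part of item `j`
  set b : Fin n → ℝ := Pi.single j 1 - Pi.single j' 1
  have hD : ∀ ε ∈ Set.Icc 0 (min (1 - ∑ x, q x j) (q i j')),
      IsStochMatching S (q + ε • Matrix.vecMulVec (Pi.single i 1) b) := by
    rintro ε ⟨hε0, hε⟩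
    have hε₁ := min_le_left (1 - ∑ x, q x j) (q i j')
    have hε₂ := min_le_right (1 - ∑ x, q x j) (q i j')
    refine hmax.1.add_smul_vecMulVec (fun x hx => ?_) (by simp [b]) (fun x y => ?_) (fun y => ?_)
    · simp [ne_of_mem_of_not_mem hi hx]
    · have := hmax.1.1 x y
      simp only [b, Pi.sub_apply, Pi.single_apply]
      split_ifs <;> simp_all
      nlinarith
    · have := hmax.1.2.2.2 y
      simp only [b, Pi.sub_apply, Pi.single_apply]
      split_ifs <;> simp_all <;> linarith
  have := hmax.sum_utility_div_nonpos hpos (lt_min (sub_pos.2 hslack) hij') hD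
  have hb : ∀ x, ∑ y, v x y * b y = v x j - v x j' := by
    simp [b, mul_sub, sum_sub_distrib, Pi.single_apply]
  simp only [utility_vecMulVec, hb, Pi.single_apply, ite_mul, one_mul, zero_mul, ite_div,
    zero_div, sum_ite_eq', hi, if_true] at this
  rwa [div_le_iff₀ (hpos i hi), zero_mul, sub_nonpos] at this

theorem div_utility_le_div_utility_add_one (hv : ∀ i j, 0 ≤ v i j)
    (hmax : IsNSWMax v S q) (hpos : ∀ i ∈ S, 0 < utility v q i) {i k j : Fin n}
    (hi : i ∈ S) (hk : k ∈ S) (hkj : 0 < q k j) :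
    v i j / utility v q i ≤ v k j / utility v q k + 1 := by
  have hdiff : v i j / utility v q i - v k j / utility v q k ≤
      ∑ j', q i j' * (v i j' / utility v q i) :=
    le_sum_mul_of_forall_pos (hmax.1.1 i) (hmax.1.2.1 i hi) fun j' hij' => by
      have h := hmax.sub_div_utility_le hpos hi hk hkj hij'
      have := div_nonneg (hv k j') (hpos k hk).le
      rw [sub_div, sub_div] at h
      linarith
  have hone : ∑ j', q i j' * (v i j' / utility v q i) = 1 := by
    calc ∑ j', q i j' * (v i j' / utility v q i) = utility v q i / utility v q i := by
          rw [utility, sum_div]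
          exact sum_congr rfl fun _ _ => by ring
      _ = 1 := div_self (hpos i hi).ne'
  linarith

theorem le_utility_of_column_slack (hmax : IsNSWMax v S q)
    (hpos : ∀ i ∈ S, 0 < utility v q i) {i j : Fin n} (hi : i ∈ S)
    (hslack : ∑ x, q x j < 1) : v i j ≤ utility v q i :=
  (le_sum_mul_of_forall_pos (hmax.1.1 i) (hmax.1.2.1 i hi) fun _ hij' =>
    hmax.le_of_column_slack hpos hi hslack hij').trans_eq (by simp only [utility, mul_comm])

theorem div_utility_le_nswPrice_add_one (hv : ∀ i j, 0 ≤ v i j)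
    (hmax : IsNSWMax v S q) (hpos : ∀ i ∈ S, 0 < utility v q i) {i : Fin n} (hi : i ∈ S)
    (j : Fin n) : v i j / utility v q i ≤ nswPrice v S q j + 1 := by
  set T := ∑ k ∈ S, q k j
  have hT : T = ∑ k, q k j := sum_subset (subset_univ S) fun k _ hk => hmax.1.2.2.1 k hk j
  have hsold : T * (v i j / utility v q i) ≤ nswPrice v S q j + T := by
    rw [sum_mul, nswPrice, ← sum_add_distrib]
    refine sum_le_sum fun k hk => ?_
    rcases (hmax.1.1 k j).eq_or_lt with h0 | hkj
    · simp [← h0]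
    · have := hmax.div_utility_le_div_utility_add_one hv hpos hi hk hkj
      nlinarith
  have hunsold : (1 - T) * (v i j / utility v q i) ≤ 1 - T := by
    rcases (hT ▸ hmax.1.2.2.2 j : T ≤ 1).eq_or_lt with h1 | hslack
    · simp [h1]
    · have := hmax.le_utility_of_column_slack hpos hi (hT ▸ hslack)
      exact mul_le_of_le_one_right (by linarith) ((div_le_one (hpos i hi)).2 this)
  linarith

theorem sum_mul_le_utility_mul_nswPrice (hv : ∀ i j, 0 ≤ v i j)
    (hmax : IsNSWMax v S q) (hpos : ∀ i ∈ S, 0 < utility v q i) {i : Fin n} (hi : i ∈ S)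
    {r : Fin n → ℝ} (hr : ∀ j, 0 ≤ r j) (hr1 : ∑ j, r j = 1) :
    ∑ j, v i j * r j ≤ utility v q i * (∑ j, r j * nswPrice v S q j + 1) := by
  calc ∑ j, v i j * r j ≤ ∑ j, utility v q i * (nswPrice v S q j + 1) * r j :=
        sum_le_sum fun j _ => mul_le_mul_of_nonneg_right
          ((div_le_iff₀' (hpos i hi)).1 (hmax.div_utility_le_nswPrice_add_one hv hpos hi j)) (hr j)
    _ = utility v q i * ∑ j, r j * (nswPrice v S q j + 1) := by
        rw [mul_sum]
        exact sum_congr rfl fun j _ => by ring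
    _ = utility v q i * (∑ j, r j * nswPrice v S q j + 1) := by
        simp only [mul_add, mul_one, sum_add_distrib, hr1]

theorem sub_one_le_sum_mul_nswPrice (hv : ∀ i j, 0 ≤ v i j)
    (hmax : IsNSWMax v S q) (hpos : ∀ i ∈ S, 0 < utility v q i) {i : Fin n} (hi : i ∈ S)
    {r : Fin n → ℝ} (hr : ∀ j, 0 ≤ r j) (hr1 : ∑ j, r j = 1)
    {d : ℝ} (hd : 0 < d) (hloss : utility v q i ≤ (∑ j, v i j * r j) / d) :
    d - 1 ≤ ∑ j, r j * nswPrice v S q j := by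
  have h := hmax.sum_mul_le_utility_mul_nswPrice hv hpos hi hr hr1
  rw [le_div_iff₀ hd] at hloss
  nlinarith [hpos i hi]

theorem sum_mass_le_two_mul_card {p : Matrix (Fin n) (Fin n) ℝ}
    (hv : ∀ i j, 0 ≤ v i j) (hp : IsNSWMax v univ p) (hnorm : ∀ i, utility v p i = 1)
    (hq : IsStochMatching S q) (T : Finset (Fin n)) :
    ∑ k ∈ S, ∑ j, (∑ i ∈ T, p i j) * (q k j * v k j) ≤ 2 * #T := by
  have hcol : ∀ i j, p i j * ∑ k ∈ S, q k j * v k j ≤ p i j * (v i j + 1) := by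
    intro i j
    rcases (hp.1.1 i j).eq_or_lt with h0 | hij
    · simp [← h0]
    refine mul_le_mul_of_nonneg_left ?_ hij.le
    have hexch : ∀ k, v k j ≤ v i j + 1 := fun k => by
      simpa [hnorm] using hp.div_utility_le_div_utility_add_one hv (by simp [hnorm])
        (mem_univ k) (mem_univ i) hij
    calc ∑ k ∈ S, q k j * v k j ≤ ∑ k ∈ S, q k j * (v i j + 1) :=
          sum_le_sum fun k _ => mul_le_mul_of_nonneg_left (hexch k) (hq.1 k j)
      _ = (∑ k ∈ S, q k j) * (v i j + 1) := (sum_mul ..).symm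
      _ ≤ 1 * (v i j + 1) := mul_le_mul_of_nonneg_right
          ((sum_le_univ_sum_of_nonneg fun k => hq.1 k j).trans (hq.2.2.2 j))
          (by linarith [hv i j])
      _ = v i j + 1 := one_mul _
  have hrow : ∀ i, ∑ j, p i j * (v i j + 1) = 2 := by
    intro i
    calc ∑ j, p i j * (v i j + 1) = utility v p i + ∑ j, p i j := by
          simp only [utility, mul_add, mul_one, sum_add_distrib, mul_comm]
      _ = 2 := by rw [hnorm, hp.1.2.1 i (mem_univ i)]; norm_num
  calc ∑ k ∈ S, ∑ j, (∑ i ∈ T, p i j) * (q k j * v k j)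
      = ∑ i ∈ T, ∑ j, p i j * ∑ k ∈ S, q k j * v k j := by
        simp only [sum_mul, mul_sum]
        rw [sum_comm, eq_comm, sum_comm]
        refine sum_congr rfl fun j _ => ?_
        rw [sum_comm]
    _ ≤ ∑ i ∈ T, ∑ j, p i j * (v i j + 1) := sum_le_sum fun i _ => sum_le_sum fun j _ => hcol i j
    _ = 2 * #T := by rw [sum_congr rfl fun i _ => hrow i, sum_const, nsmul_eq_mul, mul_comm]

end IsNSWMax

/-- Amplification lemma: if `p` and `p̄` are the NSW maximizers before and after the
removal of some agents (utilities normalized so `u_i(p) = 1` for all `i`), and every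
agent in `N₁ ⊆ N'` loses a factor `d ≥ 12` of her utility, then at least `d|N₁|/3`
remaining agents lose a factor `d/4`. -/
theorem nsw_ratio_change {n : ℕ} (v p pbar : Matrix (Fin n) (Fin n) ℝ)
    (hv : ∀ i j, 0 ≤ v i j)
    (N' : Finset (Fin n)) (N₁ : Finset (Fin n)) (hN₁ : N₁ ⊆ N')
    (hp : IsNSWMax v Finset.univ p)
    (hpbar : IsNSWMax v N' pbar)
    (hnorm : ∀ i, utility v p i = 1)
    (d : ℝ) (hd : 12 ≤ d)
    (hloss : ∀ i ∈ N₁, utility v pbar i ≤ utility v p i / d) :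
    ∃ N₂ : Finset (Fin n), N₂ ⊆ N' ∧ d * N₁.card / 3 ≤ N₂.card ∧
      ∀ k ∈ N₂, utility v pbar k ≤ 4 * utility v p k / d := by
  have hpos : ∀ k ∈ N', 0 < utility v pbar k :=
    hpbar.utility_pos_of_subset hv hp.1 (subset_univ N') fun k _ => by simp [hnorm]
  have hlower : ∀ i ∈ N₁, d - 1 ≤ ∑ j, p i j * nswPrice v N' pbar j := fun i hi =>
    hpbar.sub_one_le_sum_mul_nswPrice hv hpos (hN₁ hi) (hp.1.1 i) (hp.1.2.1 i (mem_univ i))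
      (by linarith) (hloss i hi)
  set B : Fin n → ℝ := fun k => ∑ j, (∑ i ∈ N₁, p i j) * (pbar k j * v k j)
  have hmass_le_one : ∀ j, ∑ i ∈ N₁, p i j ≤ 1 := fun j =>
    (sum_le_univ_sum_of_nonneg fun i => hp.1.1 i j).trans (hp.1.2.2.2 j)
  have hB : ∀ k ∈ N', 0 ≤ B k ∧ B k ≤ utility v pbar k := fun k _ =>
    ⟨sum_nonneg fun j _ => mul_nonneg (sum_nonneg fun i _ => hp.1.1 i j)
      (mul_nonneg (hpbar.1.1 k j) (hv k j)),
    sum_mul_mul_le_utility v hv hpbar.1.1 hmass_le_one k⟩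
  refine ⟨N'.filter (utility v pbar · ≤ 4 / d), filter_subset _ _, ?_,
    fun k hk => by simpa [hnorm] using (mem_filter.1 hk).2⟩
  have hcount := sum_div_le_card_filter_add N' (by positivity : (0 : ℝ) < 4 / d) hpos
    (fun k hk => (hB k hk).1) (fun k hk => (hB k hk).2)
  have hmass := hp.sum_mass_le_two_mul_card hv hnorm hpbar.1 N₁
  have hsum : (d - 1) * #N₁ ≤ ∑ k ∈ N', B k / utility v pbar k := by
    rw [← sum_sum_mul_nswPrice, mul_comm, ← nsmul_eq_mul]
    exact card_nsmul_le_sum _ _ _ hlower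
  rw [div_div_eq_mul_div] at hcount
  nlinarith [(#N₁).cast_nonneg (α := ℝ)]
end

section
/- If for each α ≥ 1, applying the amplification lemma α times to a single agent losing a factor ρ yields at least (ρ/3)^α · (1/4)^{α(α−1)/2} agents each with final utility at most 4^α/ρ, and ρ ≥ 4^{√(log n)+1}, then choosing α = √(log n) gives (ρ/3)^α · (1/4)^{α(α−1)/2} ≥ n and 4^α/ρ ≤ 1/4. -/
/-!
Write `α = √(log₂ n)`, so that `n = 2^(α²)`. The hypothesis on `ρ` gives `4^α ≤ ρ/4 ≤ ρ/3`,
hence `(ρ/3)^α · (1/4)^(α(α-1)/2) ≥ 4^(α²) · 4^(-α(α-1)/2) = 2^(α² + α) ≥ 2^(α²) = n`,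
and `4^α / ρ ≤ 1/4` is the same hypothesis divided by `4ρ`.
-/

open Real

lemma four_rpow_mul_self_mul_quarter_rpow (α : ℝ) :
    (4 : ℝ) ^ (α * α) * (1 / 4 : ℝ) ^ (α * (α - 1) / 2) = 2 ^ (α * α + α) := by
  have h4 : (4 : ℝ) = 2 ^ (2 : ℝ) := by norm_num
  rw [one_div, inv_rpow (by norm_num), ← rpow_neg (by norm_num), ← rpow_add (by norm_num), h4,
    ← rpow_mul (by norm_num)]
  ring_nf

lemma two_rpow_le_rpow_mul_quarter_rpow {α r : ℝ} (hα : 0 ≤ α) (hr : (4 : ℝ) ^ α ≤ r) :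
    (2 : ℝ) ^ (α * α + α) ≤ r ^ α * (1 / 4 : ℝ) ^ (α * (α - 1) / 2) := by
  rw [← four_rpow_mul_self_mul_quarter_rpow, rpow_mul (by norm_num)]
  gcongr

lemma rpow_sqrt_logb_mul_self {b x : ℝ} (hb : 1 < b) (hx : 1 ≤ x) :
    b ^ (√(logb b x) * √(logb b x)) = x := by
  rw [mul_self_sqrt (logb_nonneg hb hx), rpow_logb (by linarith) hb.ne' (by linarith)]

theorem amplification_arithmetic_general (n : ℕ) (hn : 2 ≤ n) (ρ : ℝ)
    (hbig : (4 : ℝ) ^ (Real.sqrt (Real.logb 2 n) + 1) ≤ ρ) :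
    (n : ℝ) ≤ (ρ / 3) ^ Real.sqrt (Real.logb 2 n) *
        ((1 : ℝ) / 4) ^ (Real.sqrt (Real.logb 2 n) * (Real.sqrt (Real.logb 2 n) - 1) / 2) ∧
      (4 : ℝ) ^ Real.sqrt (Real.logb 2 n) / ρ ≤ 1 / 4 := by
  set α := √(logb 2 n)
  have hα : 0 ≤ α := sqrt_nonneg _
  have h4α : 0 < (4 : ℝ) ^ α := by positivity
  have hρ : (4 : ℝ) ^ α * 4 ≤ ρ := by rwa [rpow_add_one (by norm_num)] at hbig
  have hn1 : (1 : ℝ) ≤ n := by exact_mod_cast one_le_two.trans hn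
  refine ⟨?_, ?_⟩
  · calc (n : ℝ) = 2 ^ (α * α) := (rpow_sqrt_logb_mul_self one_lt_two hn1).symm
      _ ≤ 2 ^ (α * α + α) := rpow_le_rpow_of_exponent_le one_le_two (by linarith)
      _ ≤ _ := two_rpow_le_rpow_mul_quarter_rpow hα (by linarith)
  · rw [div_le_iff₀ (by linarith)]
    linarith

/-- The arithmetic at the heart of the upper bound on utility non-monotonicity: with
`α = √(log₂ n)` and `ρ ≥ 4^(√(log₂ n)+1)`, applying the amplification lemma `α` times
yields at least `(ρ/3)^α · (1/4)^(α(α−1)/2) ≥ n` agents, each with final utility at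
most `4^α/ρ ≤ 1/4`. -/
theorem amplification_arithmetic (n : ℕ) (hn : 2 ≤ n) (ρ : ℝ) (hρ : 0 < ρ)
    (hbig : (4 : ℝ) ^ (Real.sqrt (Real.logb 2 n) + 1) ≤ ρ) :
    (n : ℝ) ≤ (ρ / 3) ^ Real.sqrt (Real.logb 2 n) *
        ((1 : ℝ) / 4) ^ (Real.sqrt (Real.logb 2 n) * (Real.sqrt (Real.logb 2 n) - 1) / 2) ∧
      (4 : ℝ) ^ Real.sqrt (Real.logb 2 n) / ρ ≤ 1 / 4 :=
  amplification_arithmetic_general n hn ρ hbig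
end

section
/- In the instance with agents {a,b}, items {A,B,C} (item allocations per agent summing to 1, per item summing to at most 1), and values v_{a,A}=1, v_{a,B}=2, v_{b,B}=2, v_{b,C}=1 (others 0), the allocation p_{a,A}=p_{a,B}=1/2, p_{b,B}=p_{b,C}=1/2 maximizes the product of utilities; consequently agent b's utility is 3/2, which is a factor 4/3 smaller than her utility 2 in the three-agent NSW solution that also included agent c with v_{c,C}=1. -/
/-- A stochastic matching for 2 agents over 3 items: nonnegative entries, each agent
row summing to `1`, each item column summing to at most `1`. -/
def IsStochMatching23 (p : Matrix (Fin 2) (Fin 3) ℝ) : Prop :=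
  (∀ i j, 0 ≤ p i j) ∧ (∀ i, ∑ j, p i j = 1) ∧ (∀ j, ∑ i, p i j ≤ 1)

/-- The expected utility of agent `i` under `p` with values `v`. -/
def utility23 (v p : Matrix (Fin 2) (Fin 3) ℝ) (i : Fin 2) : ℝ :=
  ∑ j, v i j * p i j

/-- Values of the two-agent instance (agent `c` removed): `v_{a,A}=1, v_{a,B}=2,
v_{b,B}=2, v_{b,C}=1`, other values `0`. -/
def vAB : Matrix (Fin 2) (Fin 3) ℝ :=
  !![1, 2, 0; 0, 2, 1]

/-! Writing `x = q 0 1` and `y = q 1 1` for the shares of the contested item `B`, the row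
constraints give `u_a ≤ 1 + x` and `u_b ≤ 1 + y`, while the column constraint of `B` gives
`x + y ≤ 1`; by AM-GM `(1 + x) (1 + y) ≤ ((2 + x + y) / 2)² ≤ 9 / 4`, which the half-half
allocation attains. -/

lemma utility23_nonneg {v p : Matrix (Fin 2) (Fin 3) ℝ} {i : Fin 2} (hv : ∀ j, 0 ≤ v i j)
    (hp : ∀ j, 0 ≤ p i j) : 0 ≤ utility23 v p i :=
  Finset.sum_nonneg fun j _ => mul_nonneg (hv j) (hp j)

lemma utility23_vAB_zero (q : Matrix (Fin 2) (Fin 3) ℝ) :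
    utility23 vAB q 0 = q 0 0 + 2 * q 0 1 := by
  simp [utility23, vAB, Fin.sum_univ_three]

lemma utility23_vAB_one (q : Matrix (Fin 2) (Fin 3) ℝ) :
    utility23 vAB q 1 = 2 * q 1 1 + q 1 2 := by
  simp [utility23, vAB, Fin.sum_univ_three]

lemma vAB_nonneg (i : Fin 2) (j : Fin 3) : 0 ≤ vAB i j := by
  fin_cases i <;> fin_cases j <;> norm_num [vAB]

section

variable {q : Matrix (Fin 2) (Fin 3) ℝ} (hq : IsStochMatching23 q)
include hq

lemma utility23_vAB_zero_le : utility23 vAB q 0 ≤ 1 + q 0 1 := by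
  have hrow := hq.2.1 0
  rw [Fin.sum_univ_three] at hrow
  rw [utility23_vAB_zero]
  linarith [hq.1 0 2]

lemma utility23_vAB_one_le : utility23 vAB q 1 ≤ 1 + q 1 1 := by
  have hrow := hq.2.1 1
  rw [Fin.sum_univ_three] at hrow
  rw [utility23_vAB_one]
  linarith [hq.1 1 0]

lemma utility23_vAB_mul_le : utility23 vAB q 0 * utility23 vAB q 1 ≤ 9 / 4 := by
  have hB : q 0 1 + q 1 1 ≤ 1 := by simpa [Fin.sum_univ_two] using hq.2.2 1
  have hx := hq.1 0 1
  have hy := hq.1 1 1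
  calc utility23 vAB q 0 * utility23 vAB q 1
      ≤ (1 + q 0 1) * (1 + q 1 1) :=
        mul_le_mul (utility23_vAB_zero_le hq) (utility23_vAB_one_le hq)
          (utility23_nonneg (vAB_nonneg 1) (hq.1 1)) (by linarith)
    _ ≤ ((1 + q 0 1) + (1 + q 1 1)) ^ 2 / 4 := by
        linarith [four_mul_le_sq_add (1 + q 0 1) (1 + q 1 1)]
    _ ≤ 3 ^ 2 / 4 := by gcongr; linarith
    _ = 9 / 4 := by norm_num

end

noncomputable def halfMatching : Matrix (Fin 2) (Fin 3) ℝ :=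
  !![1/2, 1/2, 0; 0, 1/2, 1/2]

lemma isStochMatching23_halfMatching : IsStochMatching23 halfMatching := by
  refine ⟨?_, ?_, ?_⟩
  · intro i j; fin_cases i <;> fin_cases j <;> norm_num [halfMatching]
  · intro i; fin_cases i <;> norm_num [halfMatching, Fin.sum_univ_three, Matrix.cons_val_two]
  · intro j; fin_cases j <;> norm_num [halfMatching, Fin.sum_univ_two, Matrix.cons_val_two]

lemma utility23_vAB_halfMatching (i : Fin 2) : utility23 vAB halfMatching i = 3 / 2 := by
  fin_cases i <;> norm_num [utility23, vAB, halfMatching, Fin.sum_univ_three, Matrix.cons_val_two]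

/-- After removing agent `c` from the three-agent instance, the allocation
`p_{a,A}=p_{a,B}=1/2`, `p_{b,B}=p_{b,C}=1/2` maximizes the product of utilities;
agent `b`'s utility is `3/2`, a factor `4/3` smaller than her utility `2` in the
three-agent NSW solution, so the Nash bargaining solution violates population
monotonicity by a factor of at least `4/3`. -/
theorem nsw_population_nonmonotone_example (p : Matrix (Fin 2) (Fin 3) ℝ)
    (hp : p = !![1/2, 1/2, 0; 0, 1/2, 1/2]) :
    IsStochMatching23 p ∧
      (∀ q : Matrix (Fin 2) (Fin 3) ℝ, IsStochMatching23 q →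
        utility23 vAB q 0 * utility23 vAB q 1 ≤ utility23 vAB p 0 * utility23 vAB p 1) ∧
      utility23 vAB p 1 = 3 / 2 ∧ (2 : ℝ) = (4 / 3) * (3 / 2) := by
  obtain rfl : p = halfMatching := hp
  refine ⟨isStochMatching23_halfMatching, fun q hq => ?_, utility23_vAB_halfMatching 1,
    by norm_num⟩
  rw [utility23_vAB_halfMatching, utility23_vAB_halfMatching]
  linarith [utility23_vAB_mul_le hq]
end
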